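/- Fix h ∈ ℕ and set c = −i/(h+n), d = −1/((h+n)(2h+2n−1)), and let P = Id + c X_s D_s + d X_s² D_s² (the projector onto homogeneity-(h+1) symplectic monogenics). Then: (i) if m is smooth with D_s m = 0 and E m = (h+1)m, then P m = m; (ii) if m is smooth with D_s m = 0 and E m = h m, then P(X_s m) = 0; (iii) if m is smooth with D_s m = 0 and E m = (h−1)m, then P(X_s² m) = 0. -/

import Mathlib

noncomputable section

open Complex Finset

/-- The configuration space `ℝ^{2n} × ℝ^n`, with points `(x, y, q)` where
`x y : Fin n → ℝ` are the base variables and `q : Fin n → ℝ` the fiber variables. -/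
abbrev Pt (n : ℕ) := (Fin n → ℝ) × (Fin n → ℝ) × (Fin n → ℝ)

/-- Partial derivative with respect to `x_j`. -/
def pdx (n : ℕ) (j : Fin n) (f : Pt n → ℂ) : Pt n → ℂ := fun p =>
  deriv (fun t => f (Function.update p.1 j t, p.2.1, p.2.2)) (p.1 j)

/-- Partial derivative with respect to `y_j`. -/
def pdy (n : ℕ) (j : Fin n) (f : Pt n → ℂ) : Pt n → ℂ := fun p =>
  deriv (fun t => f (p.1, Function.update p.2.1 j t, p.2.2)) (p.2.1 j)

/-- Partial derivative with respect to `q_j`. -/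
def pdq (n : ℕ) (j : Fin n) (f : Pt n → ℂ) : Pt n → ℂ := fun p =>
  deriv (fun t => f (p.1, p.2.1, Function.update p.2.2 j t)) (p.2.2 j)

/-- The symplectic Dirac operator `D_s f = Σ_j (i q_j ∂_{y_j} f − ∂_{x_j} ∂_{q_j} f)`. -/
def Ds (n : ℕ) (f : Pt n → ℂ) : Pt n → ℂ := fun p =>
  ∑ j : Fin n, (Complex.I * (p.2.2 j : ℂ) * pdy n j f p - pdx n j (pdq n j f) p)

/-- The operator `X_s f = Σ_j (y_j ∂_{q_j} f + i x_j q_j f)`. -/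
def Xs (n : ℕ) (f : Pt n → ℂ) : Pt n → ℂ := fun p =>
  ∑ j : Fin n, ((p.2.1 j : ℂ) * pdq n j f p + Complex.I * (p.1 j : ℂ) * (p.2.2 j : ℂ) * f p)

/-- The Euler operator `E f = Σ_j (x_j ∂_{x_j} f + y_j ∂_{y_j} f)`. -/
def Eul (n : ℕ) (f : Pt n → ℂ) : Pt n → ℂ := fun p =>
  ∑ j : Fin n, ((p.1 j : ℂ) * pdx n j f p + (p.2.1 j : ℂ) * pdy n j f p)

/-- The operator `E + n`. -/
def EN (n : ℕ) (f : Pt n → ℂ) : Pt n → ℂ := fun p => Eul n f p + (n : ℂ) * f p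

/-- The projector `P = Id + c X_s D_s + d X_s² D_s²` onto homogeneity-(h+1)
symplectic monogenics, with `c = −i/(h+n)` and `d = −1/((h+n)(2h+2n−1))`. -/
def Pproj (n h : ℕ) (f : Pt n → ℂ) : Pt n → ℂ := fun p =>
  f p + (-Complex.I / ((h : ℂ) + n)) * Xs n (Ds n f) p +
    (-1 / (((h : ℂ) + n) * (2 * (h : ℂ) + 2 * n - 1))) * Xs n (Xs n (Ds n (Ds n f))) p

namespace PA

variable {n : ℕ}

def ex (j : Fin n) : Pt n := (Pi.single j 1, 0, 0)
def ey (j : Fin n) : Pt n := (0, Pi.single j 1, 0)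
def eQ (j : Fin n) : Pt n := (0, 0, Pi.single j 1)

def DD (v : Pt n) (f : Pt n → ℂ) : Pt n → ℂ := fun p => fderiv ℝ f p v

lemma deriv_along {f : Pt n → ℂ} {p : Pt n} (hf : DifferentiableAt ℝ f p) (v : Pt n)
    (γ : ℝ → Pt n) (c : ℝ) (hγ : ∀ t, γ t = p + (t - c) • v) :
    deriv (fun t => f (γ t)) c = fderiv ℝ f p v := by
  have h1 : HasDerivAt (fun t : ℝ => p + (t - c) • v) ((1:ℝ) • v) c :=
    (((hasDerivAt_id c).sub_const c).smul_const v).const_add p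
  have h1' : HasDerivAt γ v c := by
    rw [show γ = fun t => p + (t - c) • v from funext hγ]
    simpa using h1
  have hf' : HasFDerivAt f (fderiv ℝ f p) (γ c) := by
    rw [hγ c]; simpa using hf.hasFDerivAt
  exact (hf'.comp_hasDerivAt c h1').deriv

def Lx (j : Fin n) : Pt n →L[ℝ] ℂ :=
  Complex.ofRealCLM.comp ((ContinuousLinearMap.proj j).comp
    (ContinuousLinearMap.fst ℝ (Fin n → ℝ) ((Fin n → ℝ) × (Fin n → ℝ))))
def Ly (j : Fin n) : Pt n →L[ℝ] ℂ :=
  Complex.ofRealCLM.comp ((ContinuousLinearMap.proj j).comp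
    ((ContinuousLinearMap.fst ℝ (Fin n → ℝ) (Fin n → ℝ)).comp
      (ContinuousLinearMap.snd ℝ (Fin n → ℝ) ((Fin n → ℝ) × (Fin n → ℝ)))))
def Lq (j : Fin n) : Pt n →L[ℝ] ℂ :=
  Complex.ofRealCLM.comp ((ContinuousLinearMap.proj j).comp
    ((ContinuousLinearMap.snd ℝ (Fin n → ℝ) (Fin n → ℝ)).comp
      (ContinuousLinearMap.snd ℝ (Fin n → ℝ) ((Fin n → ℝ) × (Fin n → ℝ)))))

def Cx (j : Fin n) : Pt n → ℂ := fun p => (p.1 j : ℂ)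
def Cy (j : Fin n) : Pt n → ℂ := fun p => (p.2.1 j : ℂ)
def Cq (j : Fin n) : Pt n → ℂ := fun p => (p.2.2 j : ℂ)

lemma Cx_eq (j : Fin n) : Cx j = Lx j := rfl
lemma Cy_eq (j : Fin n) : Cy j = Ly j := rfl
lemma Cq_eq (j : Fin n) : Cq j = Lq j := rfl

lemma contDiff_Cx (j : Fin n) : ContDiff ℝ (⊤ : ℕ∞) (Cx (n := n) j) := by
  rw [Cx_eq]; exact (Lx j).contDiff
lemma contDiff_Cy (j : Fin n) : ContDiff ℝ (⊤ : ℕ∞) (Cy (n := n) j) := by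
  rw [Cy_eq]; exact (Ly j).contDiff
lemma contDiff_Cq (j : Fin n) : ContDiff ℝ (⊤ : ℕ∞) (Cq (n := n) j) := by
  rw [Cq_eq]; exact (Lq j).contDiff

lemma DD_Cx (v : Pt n) (j : Fin n) (p : Pt n) : DD v (Cx j) p = ((v.1 j : ℝ) : ℂ) := by
  rw [Cx_eq]; simp [DD, ContinuousLinearMap.fderiv]; rfl
lemma DD_Cy (v : Pt n) (j : Fin n) (p : Pt n) : DD v (Cy j) p = ((v.2.1 j : ℝ) : ℂ) := by
  rw [Cy_eq]; simp [DD, ContinuousLinearMap.fderiv]; rfl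
lemma DD_Cq (v : Pt n) (j : Fin n) (p : Pt n) : DD v (Cq j) p = ((v.2.2 j : ℝ) : ℂ) := by
  rw [Cq_eq]; simp [DD, ContinuousLinearMap.fderiv]; rfl

lemma contDiff_DD (v : Pt n) {f : Pt n → ℂ} (hf : ContDiff ℝ (⊤ : ℕ∞) f) :
    ContDiff ℝ (⊤ : ℕ∞) (DD v f) := by
  have h1 : ContDiff ℝ (⊤ : ℕ∞) (fderiv ℝ f) := hf.fderiv_right (by simp)
  exact (ContinuousLinearMap.apply ℝ ℂ v).contDiff.comp h1

lemma DD_add {f g : Pt n → ℂ} {p : Pt n} (v : Pt n) (hf : DifferentiableAt ℝ f p)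
    (hg : DifferentiableAt ℝ g p) :
    DD v (fun p => f p + g p) p = DD v f p + DD v g p := by
  simp [DD, fderiv_fun_add hf hg]
lemma DD_sub {f g : Pt n → ℂ} {p : Pt n} (v : Pt n) (hf : DifferentiableAt ℝ f p)
    (hg : DifferentiableAt ℝ g p) :
    DD v (fun p => f p - g p) p = DD v f p - DD v g p := by
  simp [DD, fderiv_fun_sub hf hg]
lemma DD_mul {f g : Pt n → ℂ} {p : Pt n} (v : Pt n) (hf : DifferentiableAt ℝ f p)
    (hg : DifferentiableAt ℝ g p) :
    DD v (fun p => f p * g p) p = DD v f p * g p + f p * DD v g p := by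
  simp [DD, fderiv_fun_mul hf hg]; ring
lemma DD_const_mul {f : Pt n → ℂ} {p : Pt n} (v : Pt n) (hf : DifferentiableAt ℝ f p) (c : ℂ) :
    DD v (fun p => c * f p) p = c * DD v f p := by
  simp [DD, fderiv_const_mul hf]
lemma DD_sum {ι : Type*} {s : Finset ι} {F : ι → Pt n → ℂ} {p : Pt n} (v : Pt n)
    (hF : ∀ i ∈ s, DifferentiableAt ℝ (F i) p) :
    DD v (fun p => ∑ i ∈ s, F i p) p = ∑ i ∈ s, DD v (F i) p := by
  simp [DD, fderiv_fun_sum hF]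

lemma DD_comm {f : Pt n → ℂ} (hf : ContDiff ℝ (⊤ : ℕ∞) f) (v w : Pt n) (p : Pt n) :
    DD v (DD w f) p = DD w (DD v f) p := by
  have hd : ContDiff ℝ (⊤ : ℕ∞) (fderiv ℝ f) := hf.fderiv_right (by simp)
  have hdd : DifferentiableAt ℝ (fderiv ℝ f) p := hd.differentiable (by simp) p
  have key : ∀ a b : Pt n, DD a (DD b f) p = fderiv ℝ (fderiv ℝ f) p a b := by
    intro a b
    have : DD b f = fun q => (fderiv ℝ f q) b := rfl
    rw [this]
    show fderiv ℝ (fun q => (fderiv ℝ f q) ((fun _ => b) q)) p a = _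
    rw [fderiv_clm_apply hdd (differentiableAt_const b)]
    simp
  rw [key v w, key w v]
  exact (hf.contDiffAt.isSymmSndFDerivAt (by simp; exact WithTop.coe_le_coe.mpr (le_top : (2:ℕ∞) ≤ ⊤))) v w

-- differentiability shortcut
lemma dAt {f : Pt n → ℂ} (hf : ContDiff ℝ (⊤ : ℕ∞) f) (p : Pt n) : DifferentiableAt ℝ f p :=
  hf.differentiable (by simp) p

/-- generic derivative of an `Xs`-shaped expression -/
lemma DD_shapeX (v : Pt n) (p : Pt n) (g h : Fin n → Pt n → ℂ)
    (hg : ∀ k, ContDiff ℝ (⊤ : ℕ∞) (g k)) (hh : ∀ k, ContDiff ℝ (⊤ : ℕ∞) (h k)) :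
    DD v (fun p => ∑ k, (Cy k p * g k p + Complex.I * Cx k p * Cq k p * h k p)) p
    = ∑ k, ( ((v.2.1 k : ℝ):ℂ) * g k p + Cy k p * DD v (g k) p
        + Complex.I * ((v.1 k : ℝ):ℂ) * Cq k p * h k p
        + Complex.I * Cx k p * ((v.2.2 k : ℝ):ℂ) * h k p
        + Complex.I * Cx k p * Cq k p * DD v (h k) p) := by
  have dCx : ∀ k, DifferentiableAt ℝ (Cx (n := n) k) p := fun k => dAt (contDiff_Cx k) p
  have dCy : ∀ k, DifferentiableAt ℝ (Cy (n := n) k) p := fun k => dAt (contDiff_Cy k) p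
  have dCq : ∀ k, DifferentiableAt ℝ (Cq (n := n) k) p := fun k => dAt (contDiff_Cq k) p
  have dg : ∀ k, DifferentiableAt ℝ (g k) p := fun k => dAt (hg k) p
  have dh : ∀ k, DifferentiableAt ℝ (h k) p := fun k => dAt (hh k) p
  have dICx : ∀ k, DifferentiableAt ℝ (fun p => Complex.I * Cx k p) p :=
    fun k => (dCx k).const_mul _
  have dICxCq : ∀ k, DifferentiableAt ℝ (fun p => Complex.I * Cx k p * Cq k p) p :=
    fun k => (dICx k).mul (dCq k)
  rw [DD_sum v (fun k _ => (((dCy k).fun_mul (dg k)).fun_add ((dICxCq k).fun_mul (dh k))))]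
  refine Finset.sum_congr rfl fun k _ => ?_
  rw [DD_add v ((dCy k).fun_mul (dg k)) ((dICxCq k).fun_mul (dh k)),
    DD_mul v (dCy k) (dg k),
    DD_mul v (dICxCq k) (dh k),
    DD_mul v (dICx k) (dCq k),
    DD_const_mul v (dCx k) Complex.I,
    DD_Cx, DD_Cy, DD_Cq]
  ring

/-- generic derivative of a `Ds`-shaped expression -/
lemma DD_shapeD (v : Pt n) (p : Pt n) (a b : Fin n → Pt n → ℂ)
    (ha : ∀ j, ContDiff ℝ (⊤ : ℕ∞) (a j)) (hb : ∀ j, ContDiff ℝ (⊤ : ℕ∞) (b j)) :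
    DD v (fun p => ∑ j, (Complex.I * Cq j p * a j p - b j p)) p
    = ∑ j, ( Complex.I * ((v.2.2 j : ℝ):ℂ) * a j p + Complex.I * Cq j p * DD v (a j) p
        - DD v (b j) p) := by
  have dCq : ∀ k, DifferentiableAt ℝ (Cq (n := n) k) p := fun k => dAt (contDiff_Cq k) p
  have da : ∀ k, DifferentiableAt ℝ (a k) p := fun k => dAt (ha k) p
  have db : ∀ k, DifferentiableAt ℝ (b k) p := fun k => dAt (hb k) p
  have dICq : ∀ k, DifferentiableAt ℝ (fun p => Complex.I * Cq k p) p :=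
    fun k => (dCq k).const_mul _
  rw [DD_sum v (fun j _ => ((dICq j).fun_mul (da j)).fun_sub (db j))]
  refine Finset.sum_congr rfl fun j _ => ?_
  rw [DD_sub v ((dICq j).fun_mul (da j)) (db j),
    DD_mul v (dICq j) (da j),
    DD_const_mul v (dCq j) Complex.I, DD_Cq]

/-- generic derivative of an `Eul`-shaped expression -/
lemma DD_shapeE (v : Pt n) (p : Pt n) (a b : Fin n → Pt n → ℂ)
    (ha : ∀ j, ContDiff ℝ (⊤ : ℕ∞) (a j)) (hb : ∀ j, ContDiff ℝ (⊤ : ℕ∞) (b j)) :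
    DD v (fun p => ∑ j, (Cx j p * a j p + Cy j p * b j p)) p
    = ∑ j, ( ((v.1 j : ℝ):ℂ) * a j p + Cx j p * DD v (a j) p
        + ((v.2.1 j : ℝ):ℂ) * b j p + Cy j p * DD v (b j) p) := by
  have dCx : ∀ k, DifferentiableAt ℝ (Cx (n := n) k) p := fun k => dAt (contDiff_Cx k) p
  have dCy : ∀ k, DifferentiableAt ℝ (Cy (n := n) k) p := fun k => dAt (contDiff_Cy k) p
  have da : ∀ k, DifferentiableAt ℝ (a k) p := fun k => dAt (ha k) p
  have db : ∀ k, DifferentiableAt ℝ (b k) p := fun k => dAt (hb k) p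
  rw [DD_sum v (fun j _ => ((dCx j).fun_mul (da j)).fun_add ((dCy j).fun_mul (db j)))]
  refine Finset.sum_congr rfl fun j _ => ?_
  rw [DD_add v ((dCx j).fun_mul (da j)) ((dCy j).fun_mul (db j)),
    DD_mul v (dCx j) (da j), DD_mul v (dCy j) (db j), DD_Cx, DD_Cy]
  ring

-- component simp lemmas
@[simp] lemma ex_1 (j k : Fin n) : (ex j).1 k = if k = j then (1:ℝ) else 0 := by
  simp [ex, Pi.single_apply]
@[simp] lemma ex_21 (j k : Fin n) : (ex j).2.1 k = (0:ℝ) := rfl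
@[simp] lemma ex_22 (j k : Fin n) : (ex j).2.2 k = (0:ℝ) := rfl
@[simp] lemma ey_1 (j k : Fin n) : (ey j).1 k = (0:ℝ) := rfl
@[simp] lemma ey_21 (j k : Fin n) : (ey j).2.1 k = if k = j then (1:ℝ) else 0 := by
  simp [ey, Pi.single_apply]
@[simp] lemma ey_22 (j k : Fin n) : (ey j).2.2 k = (0:ℝ) := rfl
@[simp] lemma eQ_1 (j k : Fin n) : (eQ j).1 k = (0:ℝ) := rfl
@[simp] lemma eQ_21 (j k : Fin n) : (eQ j).2.1 k = (0:ℝ) := rfl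
@[simp] lemma eQ_22 (j k : Fin n) : (eQ j).2.2 k = if k = j then (1:ℝ) else 0 := by
  simp [eQ, Pi.single_apply]

lemma ofReal_ite {c : Prop} [Decidable c] {a b : ℝ} :
    ((if c then a else b : ℝ) : ℂ) = if c then (a:ℂ) else (b:ℂ) := by
  split <;> rfl

-- the operators
def Xs' (f : Pt n → ℂ) : Pt n → ℂ := fun p =>
  ∑ k, (Cy k p * DD (eQ k) f p + Complex.I * Cx k p * Cq k p * f p)
def Ds' (f : Pt n → ℂ) : Pt n → ℂ := fun p =>
  ∑ j, (Complex.I * Cq j p * DD (ey j) f p - DD (ex j) (DD (eQ j) f) p)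
def Eul' (f : Pt n → ℂ) : Pt n → ℂ := fun p =>
  ∑ j, (Cx j p * DD (ex j) f p + Cy j p * DD (ey j) f p)

lemma contDiff_Xs' {f : Pt n → ℂ} (hf : ContDiff ℝ (⊤ : ℕ∞) f) : ContDiff ℝ (⊤ : ℕ∞) (Xs' f) := by
  refine ContDiff.sum fun k _ => ContDiff.add ?_ ?_
  · exact (contDiff_Cy k).mul (contDiff_DD _ hf)
  · exact (((contDiff_const.mul (contDiff_Cx k)).mul (contDiff_Cq k)).mul hf)

-- specialized first derivatives of Xs'
lemma DXs_y {f : Pt n → ℂ} (hf : ContDiff ℝ (⊤ : ℕ∞) f) (j : Fin n) (p : Pt n) :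
    DD (ey j) (Xs' f) p = DD (eQ j) f p
      + ∑ k, Cy k p * DD (ey j) (DD (eQ k) f) p
      + ∑ k, Complex.I * Cx k p * Cq k p * DD (ey j) f p := by
  refine Eq.trans (DD_shapeX (ey j) p (fun k => DD (eQ k) f) (fun _ => f)
    (fun k => contDiff_DD _ hf) (fun _ => hf)) ?_
  simp only [ex_1, ex_21, ex_22, ey_1, ey_21, ey_22, eQ_1, eQ_21, eQ_22, ofReal_ite,
    ofReal_one, ofReal_zero, mul_ite, ite_mul, mul_zero, zero_mul, mul_one, one_mul,
    add_zero, zero_add, Finset.sum_add_distrib, Finset.sum_ite_eq', Finset.mem_univ, if_true]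

lemma DXs_q {f : Pt n → ℂ} (hf : ContDiff ℝ (⊤ : ℕ∞) f) (j : Fin n) (p : Pt n) :
    DD (eQ j) (Xs' f) p = Complex.I * Cx j p * f p
      + ∑ k, Cy k p * DD (eQ j) (DD (eQ k) f) p
      + ∑ k, Complex.I * Cx k p * Cq k p * DD (eQ j) f p := by
  refine Eq.trans (DD_shapeX (eQ j) p (fun k => DD (eQ k) f) (fun _ => f)
    (fun k => contDiff_DD _ hf) (fun _ => hf)) ?_
  simp only [ex_1, ex_21, ex_22, ey_1, ey_21, ey_22, eQ_1, eQ_21, eQ_22, ofReal_ite,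
    ofReal_one, ofReal_zero, mul_ite, ite_mul, mul_zero, zero_mul, mul_one, one_mul,
    add_zero, zero_add, Finset.sum_add_distrib, Finset.sum_ite_eq', Finset.mem_univ, if_true]
  ring

lemma DXs_x {f : Pt n → ℂ} (hf : ContDiff ℝ (⊤ : ℕ∞) f) (j : Fin n) (p : Pt n) :
    DD (ex j) (Xs' f) p = Complex.I * Cq j p * f p
      + ∑ k, Cy k p * DD (ex j) (DD (eQ k) f) p
      + ∑ k, Complex.I * Cx k p * Cq k p * DD (ex j) f p := by
  refine Eq.trans (DD_shapeX (ex j) p (fun k => DD (eQ k) f) (fun _ => f)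
    (fun k => contDiff_DD _ hf) (fun _ => hf)) ?_
  simp only [ex_1, ex_21, ex_22, ey_1, ey_21, ey_22, eQ_1, eQ_21, eQ_22, ofReal_ite,
    ofReal_one, ofReal_zero, mul_ite, ite_mul, mul_zero, zero_mul, mul_one, one_mul,
    add_zero, zero_add, Finset.sum_add_distrib, Finset.sum_ite_eq', Finset.mem_univ, if_true]
  ring

-- derivative of Ds' in q-direction
lemma DDs_q {f : Pt n → ℂ} (hf : ContDiff ℝ (⊤ : ℕ∞) f) (k : Fin n) (p : Pt n) :
    DD (eQ k) (Ds' f) p = Complex.I * DD (ey k) f p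
      + ∑ j, Complex.I * Cq j p * DD (eQ k) (DD (ey j) f) p
      - ∑ j, DD (eQ k) (DD (ex j) (DD (eQ j) f)) p := by
  refine Eq.trans (DD_shapeD (eQ k) p (fun j => DD (ey j) f)
    (fun j => DD (ex j) (DD (eQ j) f))
    (fun j => contDiff_DD _ hf) (fun j => contDiff_DD _ (contDiff_DD _ hf))) ?_
  simp only [eQ_1, eQ_21, eQ_22, ofReal_ite, ofReal_one, ofReal_zero, mul_ite, ite_mul,
    mul_zero, zero_mul, mul_one, one_mul, add_zero, zero_add, Finset.sum_sub_distrib,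
    Finset.sum_add_distrib, Finset.sum_ite_eq', Finset.mem_univ, if_true]

-- derivative of Eul' in q-direction
lemma DEul_q {f : Pt n → ℂ} (hf : ContDiff ℝ (⊤ : ℕ∞) f) (k : Fin n) (p : Pt n) :
    DD (eQ k) (Eul' f) p
      = ∑ j, Cx j p * DD (eQ k) (DD (ex j) f) p
      + ∑ j, Cy j p * DD (eQ k) (DD (ey j) f) p := by
  refine Eq.trans (DD_shapeE (eQ k) p (fun j => DD (ex j) f) (fun j => DD (ey j) f)
    (fun j => contDiff_DD _ hf) (fun j => contDiff_DD _ hf)) ?_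
  simp only [eQ_1, eQ_21, eQ_22, ofReal_zero, mul_zero, zero_mul, add_zero, zero_add,
    Finset.sum_add_distrib]

-- second derivative of Xs': DD (ex j) (DD (eQ j) (Xs' f))
lemma DDXs_xq {f : Pt n → ℂ} (hf : ContDiff ℝ (⊤ : ℕ∞) f) (j : Fin n) (p : Pt n) :
    DD (ex j) (DD (eQ j) (Xs' f)) p
      = Complex.I * f p + Complex.I * Cx j p * DD (ex j) f p
        + Complex.I * Cq j p * DD (eQ j) f p
        + ∑ k, Cy k p * DD (ex j) (DD (eQ j) (DD (eQ k) f)) p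
        + ∑ k, Complex.I * Cx k p * Cq k p * DD (ex j) (DD (eQ j) f) p := by
  have hfun : DD (eQ j) (Xs' f) = fun p => (Complex.I * Cx j p) * f p
      + ∑ k, (Cy k p * DD (eQ j) (DD (eQ k) f) p
          + Complex.I * Cx k p * Cq k p * DD (eQ j) f p) := by
    funext p
    rw [DXs_q hf j p]
    rw [Finset.sum_add_distrib]
    ring
  rw [hfun]
  have d1 : DifferentiableAt ℝ (fun p => Complex.I * Cx j p) p :=
    (dAt (contDiff_Cx j) p).const_mul _
  have d2 : DifferentiableAt ℝ f p := dAt hf p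
  have dsum : DifferentiableAt ℝ (fun p => ∑ k, (Cy k p * DD (eQ j) (DD (eQ k) f) p
      + Complex.I * Cx k p * Cq k p * DD (eQ j) f p)) p := by
    refine DifferentiableAt.fun_sum fun k _ => DifferentiableAt.fun_add ?_ ?_
    · exact (dAt (contDiff_Cy k) p).mul (dAt (contDiff_DD _ (contDiff_DD _ hf)) p)
    · exact (((dAt (contDiff_Cx k) p).const_mul _).mul (dAt (contDiff_Cq k) p)).mul
        (dAt (contDiff_DD _ hf) p)
  rw [DD_add (ex j) (d1.fun_mul d2) dsum, DD_mul (ex j) d1 d2,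
    DD_const_mul (ex j) (dAt (contDiff_Cx j) p) Complex.I, DD_Cx,
    DD_shapeX (ex j) p (fun k => DD (eQ j) (DD (eQ k) f)) (fun _ => DD (eQ j) f)
      (fun k => contDiff_DD _ (contDiff_DD _ hf)) (fun _ => contDiff_DD _ hf)]
  simp only [ex_1, ex_21, ex_22, ofReal_ite, ofReal_one, ofReal_zero, mul_ite, ite_mul,
    mul_zero, zero_mul, mul_one, one_mul, add_zero, zero_add, Finset.sum_add_distrib,
    Finset.sum_ite_eq', Finset.mem_univ, if_true, eq_self_iff_true]
  ring

lemma DD_swap_inner {f : Pt n → ℂ} (hf : ContDiff ℝ (⊤ : ℕ∞) f) (u v w : Pt n) (p : Pt n) :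
    DD u (DD v (DD w f)) p = DD u (DD w (DD v f)) p := by
  have h : DD v (DD w f) = DD w (DD v f) := funext fun q => DD_comm hf v w q
  rw [h]

/-- The key commutator identity `[Ds, Xs] = -i (E + n)`. -/
lemma commA {f : Pt n → ℂ} (hf : ContDiff ℝ (⊤ : ℕ∞) f) (p : Pt n) :
    Ds' (Xs' f) p = Xs' (Ds' f) p - Complex.I * (Eul' f p + (n : ℂ) * f p) := by
  have L : Ds' (Xs' f) p
      = ((∑ j, ∑ k, Complex.I * Cq j p * (Cy k p * DD (ey j) (DD (eQ k) f) p))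
        + ∑ j, ∑ k, Complex.I * Cq j p * (Complex.I * Cx k p * Cq k p * DD (ey j) f p))
        - (∑ j, ∑ k, Cy k p * DD (ex j) (DD (eQ j) (DD (eQ k) f)) p)
        - (∑ j, ∑ k, Complex.I * Cx k p * Cq k p * DD (ex j) (DD (eQ j) f) p)
        - (∑ _j : Fin n, Complex.I * f p)
        - ∑ j, Complex.I * (Cx j p * DD (ex j) f p) := by
    have step : Ds' (Xs' f) p
        = ∑ j, ((∑ k, Complex.I * Cq j p * (Cy k p * DD (ey j) (DD (eQ k) f) p)
            + ∑ k, Complex.I * Cq j p * (Complex.I * Cx k p * Cq k p * DD (ey j) f p))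
            - (∑ k, Cy k p * DD (ex j) (DD (eQ j) (DD (eQ k) f)) p)
            - (∑ k, Complex.I * Cx k p * Cq k p * DD (ex j) (DD (eQ j) f) p)
            - Complex.I * f p
            - Complex.I * (Cx j p * DD (ex j) f p)) := by
      refine Finset.sum_congr rfl fun j _ => ?_
      rw [DXs_y hf j p, DDXs_xq hf j p, mul_add, mul_add,
        Finset.mul_sum, Finset.mul_sum]
      ring
    rw [step]
    simp only [Finset.sum_sub_distrib, Finset.sum_add_distrib]
  have R : Xs' (Ds' f) p
      = ((∑ k, ∑ j, Cy k p * (Complex.I * Cq j p * DD (eQ k) (DD (ey j) f) p))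
        - ∑ k, ∑ j, Cy k p * DD (eQ k) (DD (ex j) (DD (eQ j) f)) p)
        + (∑ k, ∑ j, Complex.I * Cx k p * Cq k p
            * (Complex.I * Cq j p * DD (ey j) f p - DD (ex j) (DD (eQ j) f) p))
        + ∑ k, Complex.I * (Cy k p * DD (ey k) f p) := by
    have step : Xs' (Ds' f) p
        = ∑ k, (((∑ j, Cy k p * (Complex.I * Cq j p * DD (eQ k) (DD (ey j) f) p))
            - ∑ j, Cy k p * DD (eQ k) (DD (ex j) (DD (eQ j) f)) p)
            + (∑ j, Complex.I * Cx k p * Cq k p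
                * (Complex.I * Cq j p * DD (ey j) f p - DD (ex j) (DD (eQ j) f) p))
            + Complex.I * (Cy k p * DD (ey k) f p)) := by
      refine Finset.sum_congr rfl fun k _ => ?_
      show Cy k p * DD (eQ k) (Ds' f) p + Complex.I * Cx k p * Cq k p * Ds' f p = _
      rw [DDs_q hf k p]
      simp only [Ds']
      rw [mul_sub, mul_add, Finset.mul_sum, Finset.mul_sum, Finset.mul_sum]
      ring
    rw [step]
    simp only [Finset.sum_sub_distrib, Finset.sum_add_distrib]
  have M1 : (∑ k, ∑ j, Cy k p * (Complex.I * Cq j p * DD (eQ k) (DD (ey j) f) p))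
      = ∑ j, ∑ k, Complex.I * Cq j p * (Cy k p * DD (ey j) (DD (eQ k) f) p) := by
    rw [Finset.sum_comm]
    refine Finset.sum_congr rfl fun j _ => Finset.sum_congr rfl fun k _ => ?_
    rw [DD_comm hf (eQ k) (ey j) p]; ring
  have M2 : (∑ k, ∑ j, Cy k p * DD (eQ k) (DD (ex j) (DD (eQ j) f)) p)
      = ∑ j, ∑ k, Cy k p * DD (ex j) (DD (eQ j) (DD (eQ k) f)) p := by
    rw [Finset.sum_comm]
    refine Finset.sum_congr rfl fun j _ => Finset.sum_congr rfl fun k _ => ?_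
    rw [DD_comm (contDiff_DD _ hf) (eQ k) (ex j) p, DD_swap_inner hf (ex j) (eQ k) (eQ j) p]
  have M3 : (∑ k, ∑ j, Complex.I * Cx k p * Cq k p
        * (Complex.I * Cq j p * DD (ey j) f p - DD (ex j) (DD (eQ j) f) p))
      = (∑ j, ∑ k, Complex.I * Cq j p * (Complex.I * Cx k p * Cq k p * DD (ey j) f p))
        - ∑ j, ∑ k, Complex.I * Cx k p * Cq k p * DD (ex j) (DD (eQ j) f) p := by
    rw [Finset.sum_comm]
    calc (∑ j, ∑ k, Complex.I * Cx k p * Cq k p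
          * (Complex.I * Cq j p * DD (ey j) f p - DD (ex j) (DD (eQ j) f) p))
        = ∑ j, ∑ k, (Complex.I * Cq j p * (Complex.I * Cx k p * Cq k p * DD (ey j) f p)
            - Complex.I * Cx k p * Cq k p * DD (ex j) (DD (eQ j) f) p) := by
          exact Finset.sum_congr rfl fun j _ => Finset.sum_congr rfl fun k _ => by ring
      _ = _ := by simp only [Finset.sum_sub_distrib]
  have hSE : (∑ _j : Fin n, Complex.I * f p) = (n : ℂ) * (Complex.I * f p) := by
    simp [Finset.sum_const, Finset.card_univ, nsmul_eq_mul]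
  have hE : Complex.I * Eul' f p
      = (∑ j, Complex.I * (Cx j p * DD (ex j) f p))
        + ∑ j, Complex.I * (Cy j p * DD (ey j) f p) := by
    simp only [Eul', Finset.mul_sum, mul_add, Finset.sum_add_distrib]
  rw [L, R, M1, M2, M3, hSE, mul_add, hE]
  ring

/-- The commutator identity `[E, Xs] = Xs`. -/
lemma commB {f : Pt n → ℂ} (hf : ContDiff ℝ (⊤ : ℕ∞) f) (p : Pt n) :
    Eul' (Xs' f) p = Xs' (Eul' f) p + Xs' f p := by
  have L : Eul' (Xs' f) p
      = (((((∑ j, ∑ k, Cx j p * (Cy k p * DD (ex j) (DD (eQ k) f) p))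
        + ∑ j, ∑ k, Cx j p * (Complex.I * Cx k p * Cq k p * DD (ex j) f p))
        + ∑ j, ∑ k, Cy j p * (Cy k p * DD (ey j) (DD (eQ k) f) p))
        + ∑ j, ∑ k, Cy j p * (Complex.I * Cx k p * Cq k p * DD (ey j) f p))
        + ∑ j, Cx j p * (Complex.I * Cq j p * f p))
        + ∑ j, Cy j p * DD (eQ j) f p := by
    have step : Eul' (Xs' f) p
        = ∑ j, ((((((∑ k, Cx j p * (Cy k p * DD (ex j) (DD (eQ k) f) p))
            + ∑ k, Cx j p * (Complex.I * Cx k p * Cq k p * DD (ex j) f p))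
            + ∑ k, Cy j p * (Cy k p * DD (ey j) (DD (eQ k) f) p))
            + ∑ k, Cy j p * (Complex.I * Cx k p * Cq k p * DD (ey j) f p))
            + Cx j p * (Complex.I * Cq j p * f p))
            + Cy j p * DD (eQ j) f p) := by
      refine Finset.sum_congr rfl fun j _ => ?_
      show Cx j p * DD (ex j) (Xs' f) p + Cy j p * DD (ey j) (Xs' f) p = _
      rw [DXs_x hf j p, DXs_y hf j p, mul_add, mul_add, mul_add, mul_add,
        Finset.mul_sum, Finset.mul_sum, Finset.mul_sum, Finset.mul_sum]
      ring
    rw [step]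
    simp only [Finset.sum_add_distrib]
  have R : Xs' (Eul' f) p
      = ((∑ k, ∑ j, Cy k p * (Cx j p * DD (eQ k) (DD (ex j) f) p))
        + ∑ k, ∑ j, Cy k p * (Cy j p * DD (eQ k) (DD (ey j) f) p))
        + ∑ k, ∑ j, Complex.I * Cx k p * Cq k p
            * (Cx j p * DD (ex j) f p + Cy j p * DD (ey j) f p) := by
    have step : Xs' (Eul' f) p
        = ∑ k, (((∑ j, Cy k p * (Cx j p * DD (eQ k) (DD (ex j) f) p))
            + ∑ j, Cy k p * (Cy j p * DD (eQ k) (DD (ey j) f) p))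
            + ∑ j, Complex.I * Cx k p * Cq k p
                * (Cx j p * DD (ex j) f p + Cy j p * DD (ey j) f p)) := by
      refine Finset.sum_congr rfl fun k _ => ?_
      show Cy k p * DD (eQ k) (Eul' f) p + Complex.I * Cx k p * Cq k p * Eul' f p = _
      rw [DEul_q hf k p]
      simp only [Eul']
      rw [mul_add, Finset.mul_sum, Finset.mul_sum, Finset.mul_sum]
    rw [step]
    simp only [Finset.sum_add_distrib]
  have M1 : (∑ k, ∑ j, Cy k p * (Cx j p * DD (eQ k) (DD (ex j) f) p))
      = ∑ j, ∑ k, Cx j p * (Cy k p * DD (ex j) (DD (eQ k) f) p) := by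
    rw [Finset.sum_comm]
    refine Finset.sum_congr rfl fun j _ => Finset.sum_congr rfl fun k _ => ?_
    rw [DD_comm hf (eQ k) (ex j) p]; ring
  have M2 : (∑ k, ∑ j, Cy k p * (Cy j p * DD (eQ k) (DD (ey j) f) p))
      = ∑ j, ∑ k, Cy j p * (Cy k p * DD (ey j) (DD (eQ k) f) p) := by
    rw [Finset.sum_comm]
    refine Finset.sum_congr rfl fun j _ => Finset.sum_congr rfl fun k _ => ?_
    rw [DD_comm hf (eQ k) (ey j) p]; ring
  have M3 : (∑ k, ∑ j, Complex.I * Cx k p * Cq k p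
        * (Cx j p * DD (ex j) f p + Cy j p * DD (ey j) f p))
      = (∑ j, ∑ k, Cx j p * (Complex.I * Cx k p * Cq k p * DD (ex j) f p))
        + ∑ j, ∑ k, Cy j p * (Complex.I * Cx k p * Cq k p * DD (ey j) f p) := by
    rw [Finset.sum_comm]
    calc (∑ j, ∑ k, Complex.I * Cx k p * Cq k p
          * (Cx j p * DD (ex j) f p + Cy j p * DD (ey j) f p))
        = ∑ j, ∑ k, (Cx j p * (Complex.I * Cx k p * Cq k p * DD (ex j) f p)
            + Cy j p * (Complex.I * Cx k p * Cq k p * DD (ey j) f p)) := by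
          exact Finset.sum_congr rfl fun j _ => Finset.sum_congr rfl fun k _ => by ring
      _ = _ := by simp only [Finset.sum_add_distrib]
  have hXs : Xs' f p = (∑ j, Cy j p * DD (eQ j) f p) + ∑ j, Cx j p * (Complex.I * Cq j p * f p) := by
    show (∑ j, (Cy j p * DD (eQ j) f p + Complex.I * Cx j p * Cq j p * f p)) = _
    rw [Finset.sum_add_distrib]
    congr 1
    exact Finset.sum_congr rfl fun j _ => by ring
  rw [L, R, M1, M2, M3, hXs]
  ring

lemma pdx_eq {f : Pt n → ℂ} {p : Pt n} (hf : DifferentiableAt ℝ f p) (j : Fin n) :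
    pdx n j f p = DD (ex j) f p := by
  refine deriv_along hf (ex j) _ (p.1 j) (fun t => ?_)
  refine Prod.ext ?_ (Prod.ext ?_ ?_)
  · funext k
    simp only [ex, Prod.fst_add, Prod.smul_fst, Pi.add_apply, Pi.smul_apply,
      Function.update_apply, Pi.single_apply, smul_eq_mul]
    by_cases h : k = j <;> simp [h]
  · simp [ex]
  · simp [ex]

lemma pdy_eq {f : Pt n → ℂ} {p : Pt n} (hf : DifferentiableAt ℝ f p) (j : Fin n) :
    pdy n j f p = DD (ey j) f p := by
  refine deriv_along hf (ey j) _ (p.2.1 j) (fun t => ?_)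
  refine Prod.ext ?_ (Prod.ext ?_ ?_)
  · simp [ey]
  · funext k
    simp only [ey, Prod.snd_add, Prod.smul_snd, Prod.fst_add, Prod.smul_fst, Pi.add_apply,
      Pi.smul_apply, Function.update_apply, Pi.single_apply, smul_eq_mul]
    by_cases h : k = j <;> simp [h]
  · simp [ey]

lemma pdq_eq {f : Pt n → ℂ} {p : Pt n} (hf : DifferentiableAt ℝ f p) (j : Fin n) :
    pdq n j f p = DD (eQ j) f p := by
  refine deriv_along hf (eQ j) _ (p.2.2 j) (fun t => ?_)
  refine Prod.ext ?_ (Prod.ext ?_ ?_)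
  · simp [eQ]
  · simp [eQ]
  · funext k
    simp only [eQ, Prod.snd_add, Prod.smul_snd, Pi.add_apply,
      Pi.smul_apply, Function.update_apply, Pi.single_apply, smul_eq_mul]
    by_cases h : k = j <;> simp [h]

-- operator equalities for smooth functions
lemma Xs_eq {f : Pt n → ℂ} (hf : ContDiff ℝ (⊤ : ℕ∞) f) (p : Pt n) : Xs n f p = Xs' f p := by
  refine Finset.sum_congr rfl fun j _ => ?_
  rw [pdq_eq (dAt hf p) j]; rfl

lemma Eul_eq {f : Pt n → ℂ} (hf : ContDiff ℝ (⊤ : ℕ∞) f) (p : Pt n) : Eul n f p = Eul' f p := by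
  refine Finset.sum_congr rfl fun j _ => ?_
  rw [pdx_eq (dAt hf p) j, pdy_eq (dAt hf p) j]; rfl

lemma Ds_eq {f : Pt n → ℂ} (hf : ContDiff ℝ (⊤ : ℕ∞) f) (p : Pt n) : Ds n f p = Ds' f p := by
  refine Finset.sum_congr rfl fun j _ => ?_
  have h1 : pdq n j f = DD (eQ j) f := funext fun q => pdq_eq (dAt hf q) j
  rw [pdy_eq (dAt hf p) j, h1, pdx_eq (dAt (contDiff_DD (eQ j) hf) p) j]; rfl

-- unconditional linearity and zero lemmas for the raw operators
lemma pdq_const_mul (j : Fin n) (c : ℂ) (f : Pt n → ℂ) (p : Pt n) :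
    pdq n j (fun p => c * f p) p = c * pdq n j f p := by
  simp [pdq, deriv_const_mul_field]

lemma pdy_const_mul (j : Fin n) (c : ℂ) (f : Pt n → ℂ) (p : Pt n) :
    pdy n j (fun p => c * f p) p = c * pdy n j f p := by
  simp [pdy, deriv_const_mul_field]

lemma pdx_const_mul (j : Fin n) (c : ℂ) (f : Pt n → ℂ) (p : Pt n) :
    pdx n j (fun p => c * f p) p = c * pdx n j f p := by
  simp [pdx, deriv_const_mul_field]

lemma Xs_const_mul (c : ℂ) (f : Pt n → ℂ) (p : Pt n) :
    Xs n (fun p => c * f p) p = c * Xs n f p := by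
  simp only [Xs]
  rw [Finset.mul_sum]
  refine Finset.sum_congr rfl fun j _ => ?_
  rw [pdq_const_mul]; ring

lemma Ds_const_mul (c : ℂ) (f : Pt n → ℂ) (p : Pt n) :
    Ds n (fun p => c * f p) p = c * Ds n f p := by
  simp only [Ds]
  rw [Finset.mul_sum]
  refine Finset.sum_congr rfl fun j _ => ?_
  have h1 : pdq n j (fun p => c * f p) = fun p => c * pdq n j f p :=
    funext fun q => pdq_const_mul j c f q
  rw [pdy_const_mul, h1, pdx_const_mul]; ring

lemma pdq_zero (j : Fin n) (p : Pt n) : pdq n j (fun _ => (0:ℂ)) p = 0 := by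
  simp [pdq]
lemma pdy_zero (j : Fin n) (p : Pt n) : pdy n j (fun _ => (0:ℂ)) p = 0 := by
  simp [pdy]
lemma pdx_zero (j : Fin n) (p : Pt n) : pdx n j (fun _ => (0:ℂ)) p = 0 := by
  simp [pdx]

lemma Xs_zero (p : Pt n) : Xs n (fun _ => (0:ℂ)) p = 0 := by
  simp only [Xs]
  refine Finset.sum_eq_zero fun j _ => ?_
  rw [pdq_zero]; ring

lemma Ds_zero (p : Pt n) : Ds n (fun _ => (0:ℂ)) p = 0 := by
  simp only [Ds]
  refine Finset.sum_eq_zero fun j _ => ?_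
  have h1 : pdq n j (fun _ : Pt n => (0:ℂ)) = fun _ => (0:ℂ) :=
    funext fun q => pdq_zero j q
  rw [pdy_zero, h1, pdx_zero]; ring


end PA

open PA

/-- The projector `P = Id + c X_s D_s + d X_s² D_s²` with `c = −i/(h+n)`,
`d = −1/((h+n)(2h+2n−1))` acts as the identity on homogeneity-(h+1) monogenics and
kills `X_s`-multiples of lower monogenics. -/
theorem Pproj_spec (n h : ℕ) (hn : 1 ≤ n) :
    (∀ m : Pt n → ℂ, ContDiff ℝ (⊤ : ℕ∞) m → (∀ p, Ds n m p = 0) →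
      (∀ p, Eul n m p = ((h : ℂ) + 1) * m p) → ∀ p, Pproj n h m p = m p) ∧
    (∀ m : Pt n → ℂ, ContDiff ℝ (⊤ : ℕ∞) m → (∀ p, Ds n m p = 0) →
      (∀ p, Eul n m p = (h : ℂ) * m p) → ∀ p, Pproj n h (Xs n m) p = 0) ∧
    (∀ m : Pt n → ℂ, ContDiff ℝ (⊤ : ℕ∞) m → (∀ p, Ds n m p = 0) →
      (∀ p, Eul n m p = ((h : ℂ) - 1) * m p) → ∀ p, Pproj n h (Xs n (Xs n m)) p = 0) := by
  have hA : ((h : ℂ) + n) ≠ 0 := by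
    have : ((h + n : ℕ) : ℂ) ≠ 0 := Nat.cast_ne_zero.mpr (by omega)
    push_cast at this; exact this
  have hB : (2 * (h : ℂ) + 2 * n - 1) ≠ 0 := by
    have h1 : ((2 * h + 2 * n - 1 : ℕ) : ℂ) = 2 * (h : ℂ) + 2 * n - 1 := by
      rw [Nat.cast_sub (by omega)]; push_cast; ring
    rw [← h1]
    exact Nat.cast_ne_zero.mpr (by omega)
  have hzero : (fun _ : Pt n => (0 : ℂ)) = Xs n (fun _ => (0:ℂ)) := (funext Xs_zero).symm
  refine ⟨?_, ?_, ?_⟩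
  · -- part (i)
    intro m hm hD hE p
    have h0 : Ds n m = fun _ => (0:ℂ) := funext hD
    have hx0 : Xs n (fun _ : Pt n => (0:ℂ)) = fun _ => (0:ℂ) := funext Xs_zero
    have hd0 : Ds n (fun _ : Pt n => (0:ℂ)) = fun _ => (0:ℂ) := funext Ds_zero
    simp only [Pproj, h0, hx0, hd0]
    simp
  · -- part (ii)
    intro m hm hD hE p
    have hXm : Xs n m = Xs' m := funext fun q => Xs_eq hm q
    have hDs'm : Ds' m = fun _ => (0:ℂ) := funext fun q => by rw [← Ds_eq hm q]; exact hD q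
    have hXsm : ContDiff ℝ (⊤ : ℕ∞) (Xs' (n := n) m) := contDiff_Xs' hm
    -- Ds (Xs m) = -I (h+n) m
    have key : Ds n (Xs n m) = fun q => (-Complex.I * ((h : ℂ) + n)) * m q := by
      funext q
      rw [hXm, Ds_eq hXsm q, commA hm q, hDs'm]
      have hx0 : Xs' (n := n) (fun _ => (0:ℂ)) q = 0 := by
        rw [← Xs_eq (contDiff_const (c := (0:ℂ))) q]
        exact Xs_zero q
      rw [hx0, ← Eul_eq hm q, hE q]
      ring
    have t1 : Xs n (Ds n (Xs n m)) p = (-Complex.I * ((h : ℂ) + n)) * Xs n m p := by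
      rw [key]; exact Xs_const_mul _ m p
    have t2 : Ds n (Ds n (Xs n m)) = fun _ => (0:ℂ) := by
      funext q
      rw [key, Ds_const_mul]
      rw [hD q]; ring
    have hx0' : Xs n (fun _ : Pt n => (0:ℂ)) = fun _ => (0:ℂ) := funext Xs_zero
    have t3 : Xs n (Xs n (Ds n (Ds n (Xs n m)))) p = 0 := by
      rw [t2, hx0']
      exact Xs_zero p
    simp only [Pproj, t1, t3]
    have hI : Complex.I * Complex.I = -1 := Complex.I_mul_I
    have e1 : ((h : ℂ) + n) * ((h : ℂ) + n)⁻¹ = 1 := mul_inv_cancel₀ hA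
    linear_combination (((h : ℂ) + n)⁻¹ * ((h : ℂ) + n) * Xs n m p) * hI - Xs n m p * e1
  · -- part (iii)
    intro m hm hD hE p
    have hXm : Xs n m = Xs' m := funext fun q => Xs_eq hm q
    have hXsm : ContDiff ℝ (⊤ : ℕ∞) (Xs' (n := n) m) := contDiff_Xs' hm
    have hXXm : Xs n (Xs n m) = Xs' (Xs' m) := by
      rw [hXm]; exact funext fun q => Xs_eq hXsm q
    have hDs'm : Ds' m = fun _ => (0:ℂ) := funext fun q => by rw [← Ds_eq hm q]; exact hD q
    set A : ℂ := (h : ℂ) + n - 1 with hAdef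
    set B : ℂ := 2 * (h : ℂ) + 2 * n - 1 with hBdef
    -- step 1 : Ds (Xs m) = -I A m
    have key1 : Ds n (Xs n m) = fun q => (-Complex.I * A) * m q := by
      funext q
      rw [hXm, Ds_eq hXsm q, commA hm q, hDs'm]
      have hx0 : Xs' (n := n) (fun _ => (0:ℂ)) q = 0 := by
        rw [← Xs_eq (contDiff_const (c := (0:ℂ))) q]; exact Xs_zero q
      rw [hx0, ← Eul_eq hm q, hE q, hAdef]
      ring
    -- Xs' of a constant multiple of a smooth function
    have XsCM : ∀ (c : ℂ) (g : Pt n → ℂ), ContDiff ℝ (⊤ : ℕ∞) g → ∀ q,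
        Xs' (n := n) (fun r => c * g r) q = c * Xs n g q := by
      intro c g hg q
      rw [← Xs_eq (contDiff_const.mul hg) q]
      exact Xs_const_mul c g q
    -- Euler of Xs m
    have keyE : ∀ q, Eul' (Xs' (n := n) m) q = (h : ℂ) * Xs n m q := by
      intro q
      rw [commB hm q]
      have hEul'm : Eul' (n := n) m = fun r => ((h : ℂ) - 1) * m r :=
        funext fun r => by rw [← Eul_eq hm r]; exact hE r
      rw [hEul'm, XsCM _ m hm q, ← Xs_eq hm q]
      ring
    -- step 2 : Ds (Xs (Xs m)) = -I B (Xs m)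
    have key2 : Ds n (Xs n (Xs n m)) = fun q => (-Complex.I * B) * Xs n m q := by
      funext q
      rw [hXXm, Ds_eq (contDiff_Xs' hXsm) q, commA hXsm q]
      have hDs'Xsm : Ds' (Xs' (n := n) m) = fun r => (-Complex.I * A) * m r := by
        funext r
        rw [← Ds_eq hXsm r, ← hXm, key1]
      rw [hDs'Xsm, XsCM _ m hm q, keyE q, ← Xs_eq hm q, hBdef, hAdef]
      ring
    -- step 3 : Ds² (Xs² m) = (-I B)(-I A) m
    have key3 : Ds n (Ds n (Xs n (Xs n m))) = fun q => ((-Complex.I * B) * (-Complex.I * A)) * m q := by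
      funext q
      rw [key2, Ds_const_mul, key1]
      ring
    have t1 : Xs n (Ds n (Xs n (Xs n m))) p = (-Complex.I * B) * Xs n (Xs n m) p := by
      rw [key2]; exact Xs_const_mul _ _ p
    have t2 : Xs n (Xs n (Ds n (Ds n (Xs n (Xs n m))))) p
        = ((-Complex.I * B) * (-Complex.I * A)) * Xs n (Xs n m) p := by
      rw [key3]
      have hmid : Xs n (fun q => ((-Complex.I * B) * (-Complex.I * A)) * m q)
          = fun q => ((-Complex.I * B) * (-Complex.I * A)) * Xs n m q :=
        funext fun q => Xs_const_mul _ m q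
      rw [hmid]
      exact Xs_const_mul _ _ p
    simp only [Pproj, t1, t2]
    rw [hAdef, hBdef]
    have hB' : (2 * (h : ℂ) + 2 * n - 1) ≠ 0 := hB
    have hI : Complex.I * Complex.I = -1 := Complex.I_mul_I
    have e1 : ((h : ℂ) + n) * ((h : ℂ) + n)⁻¹ = 1 := mul_inv_cancel₀ hA
    have e2 : (2 * (h : ℂ) + 2 * n - 1) * (2 * (h : ℂ) + 2 * n - 1)⁻¹ = 1 := mul_inv_cancel₀ hB'
    simp only [div_eq_mul_inv, mul_inv]
    linear_combination ((2 * (h : ℂ) + 2 * n - 1) * ((h : ℂ) + n)⁻¹ * Xs n (Xs n m) p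
        - ((h : ℂ) + n - 1) * (2 * (h : ℂ) + 2 * n - 1) * ((h : ℂ) + n)⁻¹
          * (2 * (h : ℂ) + 2 * n - 1)⁻¹ * Xs n (Xs n m) p) * hI
      + ((h : ℂ) + n - 1) * ((h : ℂ) + n)⁻¹ * Xs n (Xs n m) p * e2 - Xs n (Xs n m) p * e1
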